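/- Let ρ be the Riesz product generated by coefficients α_j ∈ [−1,1] and frequencies ℓ_j with ℓ_{j+1} ≥ 3ℓ_j, i.e., the weak limit of dρ_n(e^{iθ}) = Π_{j=0}^n (1 + α_j cos(ℓ_j θ)) dθ/(2π). With N_n = Σ_{j=0}^n ℓ_j, one has e_{N_n}(ρ)² ≥ Π_{j=0}^n (1/2)(1 + √(1 − α_j²)). -/

import Mathlib

open MeasureTheory Complex Polynomial Filter

/-- The squared Szegő minimum `e_n(ρ)²`. -/
noncomputable def szegoE2 (ρ : Measure ℂ) (n : ℕ) : ℝ :=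
  sInf { x | ∃ q : Polynomial ℂ, q.Monic ∧ q.natDegree = n ∧
    x = ∫ z, ‖q.eval z‖ ^ 2 ∂ρ }

/-- The partial Riesz product `dρ_n(e^{iθ}) = Π_{j=0}^n (1 + α_j cos(ℓ_j θ)) dθ/(2π)`,
pushed forward to the unit circle. -/
noncomputable def rieszPartial (α : ℕ → ℝ) (l : ℕ → ℕ) (n : ℕ) : Measure ℂ :=
  Measure.map (fun θ : ℝ => Complex.exp (θ * Complex.I))
    ((volume.restrict (Set.Ioc (-Real.pi) Real.pi)).withDensity fun θ =>
      ENNReal.ofReal ((2 * Real.pi)⁻¹ *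
        ∏ j ∈ Finset.range (n + 1), (1 + α j * Real.cos (l j * θ))))

/-!
Each factor of the Riesz product is the squared modulus of a binomial on the circle: for
`a = sin (2ψ)`, `1 + a cos (ℓθ) = |sin ψ + cos ψ e^{iℓθ}|²`. By Parseval, `∫ |q|² dρ_m` is thus
the sum of the squared moduli of the coefficients of `q ∏_{j ≤ m} (sin ψ_j + cos ψ_j X^{ℓ_j})`.
By lacunarity `ℓ_{m+1}` exceeds the degree of the product up to `m` (for `m ≥ n`, as
`deg q = N_n`), so the next binomial splits the coefficients into two disjoint blocks weighted by
`sin² ψ + cos² ψ = 1`: the coefficient sum is the same for all `m ≥ n`. It is at least the squared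
leading coefficient `∏_{j ≤ n} cos² ψ_j = ∏_{j ≤ n} (1 + √(1 - α_j²)) / 2`, and the bound passes
to the weak limit `ρ`.
-/

open Finset
open scoped Real

namespace Polynomial

variable {K : Type*} [NormedDivisionRing K]

noncomputable def sumSqNormCoeff (p : K[X]) : ℝ := ∑ i ∈ p.support, ‖p.coeff i‖ ^ 2

theorem sumSqNormCoeff_eq_sum_range {p : K[X]} {n : ℕ} (hn : p.natDegree < n) :
    sumSqNormCoeff p = ∑ i ∈ range n, ‖p.coeff i‖ ^ 2 :=
  p.sum_over_range' (f := fun _ c => ‖c‖ ^ 2) (by simp) n hn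

theorem sq_norm_coeff_le_sumSqNormCoeff (p : K[X]) (i : ℕ) :
    ‖p.coeff i‖ ^ 2 ≤ sumSqNormCoeff p := by
  by_cases hi : i ∈ p.support
  · exact single_le_sum (fun j _ => sq_nonneg ‖p.coeff j‖) hi
  · rw [notMem_support_iff.1 hi, norm_zero, sq, zero_mul]
    exact sum_nonneg fun j _ => sq_nonneg _

theorem sumSqNormCoeff_mul_C (p : K[X]) (a : K) :
    sumSqNormCoeff (p * C a) = ‖a‖ ^ 2 * sumSqNormCoeff p := by
  have hdeg : (p * C a).natDegree < p.natDegree + 1 :=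
    Nat.lt_succ_of_le (natDegree_mul_C_le p a)
  rw [sumSqNormCoeff_eq_sum_range hdeg, sumSqNormCoeff_eq_sum_range (Nat.lt_succ_self _),
    mul_sum]
  exact sum_congr rfl fun i _ => by rw [coeff_mul_C, norm_mul, mul_pow, mul_comm]

theorem sumSqNormCoeff_add_mul_X_pow {p : K[X]} {ℓ : ℕ} (hp : p.natDegree < ℓ) (q : K[X]) :
    sumSqNormCoeff (p + q * X ^ ℓ) = sumSqNormCoeff p + sumSqNormCoeff q := by
  have hdeg : (p + q * X ^ ℓ).natDegree < ℓ + (q.natDegree + 1) := by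
    refine (natDegree_add_le _ _).trans_lt (max_lt (by omega) ?_)
    exact (natDegree_mul_le.trans_eq (by rw [natDegree_X_pow])).trans_lt (by omega)
  rw [sumSqNormCoeff_eq_sum_range hdeg, sum_range_add, sumSqNormCoeff_eq_sum_range hp,
    sumSqNormCoeff_eq_sum_range (Nat.lt_succ_self q.natDegree)]
  congr 1
  · refine sum_congr rfl fun i hi => ?_
    rw [coeff_add, coeff_mul_X_pow', if_neg (by simpa using hi), add_zero]
  · refine sum_congr rfl fun i _ => ?_
    rw [coeff_add, add_comm ℓ i, coeff_mul_X_pow, coeff_eq_zero_of_natDegree_lt (by omega),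
      zero_add]

end Polynomial

theorem Real.circleAverage_zero_one_eq_integral {E : Type*} [NormedAddCommGroup E]
    [NormedSpace ℝ E] (g : ℂ → E) :
    circleAverage g 0 1 = (2 * π)⁻¹ • ∫ θ in (-π)..π, g (Complex.exp (θ * I)) := by
  rw [Real.circleAverage_eq_integral_add (-π),
    intervalIntegral.integral_comp_add_right (fun θ => g (circleMap 0 1 θ))]
  simp only [circleMap_zero, ofReal_one, one_mul]
  ring_nf

theorem integral_map_exp_mul_I_withDensity {w : ℝ → ℝ} (hw : Measurable w)
    (hw0 : ∀ θ, 0 ≤ w θ) {f : ℂ → ℝ} (hf : Continuous f) :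
    ∫ z, f z ∂(((volume.restrict (Set.Ioc (-π) π)).withDensity
        fun θ => ENNReal.ofReal (w θ)).map fun θ : ℝ => exp (θ * I)) =
      ∫ θ in (-π)..π, w θ * f (exp (θ * I)) := by
  rw [integral_map (by fun_prop) hf.aestronglyMeasurable,
    integral_withDensity_eq_integral_toReal_smul hw.ennreal_ofReal
      (ae_of_all _ fun _ => ENNReal.ofReal_lt_top),
    intervalIntegral.integral_of_le (by linarith [Real.pi_pos])]
  simp only [ENNReal.toReal_ofReal (hw0 _), smul_eq_mul]

noncomputable def rieszFactor (ψ : ℝ) (ℓ : ℕ) : ℂ[X] :=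
  C (Real.sin ψ : ℂ) + C (Real.cos ψ : ℂ) * X ^ ℓ

theorem natDegree_rieszFactor_le (ψ : ℝ) (ℓ : ℕ) : (rieszFactor ψ ℓ).natDegree ≤ ℓ :=
  (natDegree_add_le _ _).trans (max_le (by rw [natDegree_C]; exact Nat.zero_le _)
    (natDegree_C_mul_X_pow_le _ _))

theorem leadingCoeff_rieszFactor {ψ : ℝ} (hψ : Real.cos ψ ≠ 0) {ℓ : ℕ} (hℓ : 0 < ℓ) :
    (rieszFactor ψ ℓ).leadingCoeff = Real.cos ψ := by
  have hc : (Real.cos ψ : ℂ) ≠ 0 := ofReal_ne_zero.2 hψ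
  have hlt : (C (Real.sin ψ : ℂ)).degree < (C (Real.cos ψ : ℂ) * X ^ ℓ).degree := by
    rw [degree_C_mul_X_pow ℓ hc]
    exact degree_C_le.trans_lt (by exact_mod_cast hℓ)
  rw [rieszFactor, leadingCoeff_add_of_degree_lt hlt, leadingCoeff_C_mul_X_pow]

theorem sq_norm_eval_rieszFactor (ψ θ : ℝ) (ℓ : ℕ) :
    ‖(rieszFactor ψ ℓ).eval (exp (θ * I))‖ ^ 2 = 1 + Real.sin (2 * ψ) * Real.cos (ℓ * θ) := by
  have hpow : exp (θ * I) ^ ℓ = exp ((ℓ * θ : ℝ) * I) := by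
    rw [← exp_nat_mul]; push_cast; ring_nf
  rw [rieszFactor, eval_add, eval_C, eval_mul, eval_C, eval_pow, eval_X, hpow, Complex.sq_norm,
    normSq_apply]
  simp only [add_re, add_im, mul_re, mul_im, ofReal_re, ofReal_im, exp_ofReal_mul_I_re,
    exp_ofReal_mul_I_im]
  linear_combination Real.cos ψ ^ 2 * Real.sin_sq_add_cos_sq (ℓ * θ) +
    Real.sin_sq_add_cos_sq ψ - Real.cos (ℓ * θ) * Real.sin_two_mul ψ

theorem sumSqNormCoeff_mul_rieszFactor {p : ℂ[X]} {ℓ : ℕ} (hp : p.natDegree < ℓ) (ψ : ℝ) :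
    sumSqNormCoeff (p * rieszFactor ψ ℓ) = sumSqNormCoeff p := by
  have hlow : (p * C (Real.sin ψ : ℂ)).natDegree < ℓ := (natDegree_mul_C_le _ _).trans_lt hp
  rw [rieszFactor, mul_add, ← mul_assoc, sumSqNormCoeff_add_mul_X_pow hlow,
    sumSqNormCoeff_mul_C, sumSqNormCoeff_mul_C, ← add_mul, norm_real, norm_real,
    Real.norm_eq_abs, Real.norm_eq_abs, sq_abs, sq_abs, Real.sin_sq_add_cos_sq, one_mul]

theorem one_add_mul_cos_eq_sq_norm_eval_rieszFactor {a : ℝ} (ha : a ∈ Set.Icc (-1 : ℝ) 1)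
    (ℓ : ℕ) (θ : ℝ) :
    1 + a * Real.cos (ℓ * θ) =
      ‖(rieszFactor (Real.arcsin a / 2) ℓ).eval (exp (θ * I))‖ ^ 2 := by
  rw [sq_norm_eval_rieszFactor, mul_div_cancel₀ _ two_ne_zero, Real.sin_arcsin' ha]

theorem integral_sq_norm_eval_rieszPartial {α : ℕ → ℝ} (hα : ∀ j, α j ∈ Set.Icc (-1 : ℝ) 1)
    (l : ℕ → ℕ) (m : ℕ) (q : ℂ[X]) :
    ∫ z, ‖q.eval z‖ ^ 2 ∂(rieszPartial α l m) =
      sumSqNormCoeff (q * ∏ j ∈ range (m + 1), rieszFactor (Real.arcsin (α j) / 2) (l j)) := by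
  have hprod : ∀ θ : ℝ, ∏ j ∈ range (m + 1), (1 + α j * Real.cos (l j * θ)) =
      ∏ j ∈ range (m + 1), ‖(rieszFactor (Real.arcsin (α j) / 2) (l j)).eval (exp (θ * I))‖ ^ 2 :=
    fun θ => prod_congr rfl fun j _ => one_add_mul_cos_eq_sq_norm_eval_rieszFactor (hα j) _ θ
  have hw0 : ∀ θ : ℝ, 0 ≤ (2 * π)⁻¹ * ∏ j ∈ range (m + 1), (1 + α j * Real.cos (l j * θ)) :=
    fun θ => by rw [hprod]; positivity
  rw [rieszPartial, integral_map_exp_mul_I_withDensity (by fun_prop) hw0 (by fun_prop),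
    sumSqNormCoeff, sum_sq_norm_coeff_eq_circleAverage, Real.circleAverage_zero_one_eq_integral,
    smul_eq_mul, ← intervalIntegral.integral_const_mul]
  refine intervalIntegral.integral_congr fun θ _ => ?_
  rw [mul_assoc, hprod, eval_mul, eval_prod, norm_mul, norm_prod, mul_pow, prod_pow]
  ring

theorem two_mul_sum_range_lt_of_lacunary {l : ℕ → ℕ} (h0 : 0 < l 0)
    (hlac : ∀ j, 3 * l j ≤ l (j + 1)) (k : ℕ) :
    2 * ∑ j ∈ range (k + 1), l j < l (k + 1) := by
  induction k with
  | zero => have := hlac 0; rw [zero_add] at this; rw [zero_add, sum_range_one]; omega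
  | succ k ih => have := hlac (k + 1); rw [sum_range_succ]; omega

theorem sumSqNormCoeff_mul_prod_rieszFactor_eq {l : ℕ → ℕ} (h0 : 0 < l 0)
    (hlac : ∀ j, 3 * l j ≤ l (j + 1)) (ψ : ℕ → ℝ) {n : ℕ} {q : ℂ[X]}
    (hq : q.natDegree ≤ ∑ j ∈ range (n + 1), l j) {m : ℕ} (hm : n ≤ m) :
    sumSqNormCoeff (q * ∏ j ∈ range (m + 1), rieszFactor (ψ j) (l j)) =
      sumSqNormCoeff (q * ∏ j ∈ range (n + 1), rieszFactor (ψ j) (l j)) := by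
  induction m, hm using Nat.le_induction with
  | base => rfl
  | succ m hnm ih =>
    have hsum : ∑ j ∈ range (n + 1), l j ≤ ∑ j ∈ range (m + 1), l j :=
      sum_le_sum_of_subset (range_subset_range.2 (by omega))
    have hprod : (∏ j ∈ range (m + 1), rieszFactor (ψ j) (l j)).natDegree ≤
        ∑ j ∈ range (m + 1), l j :=
      (natDegree_prod_le _ _).trans (sum_le_sum fun j _ => natDegree_rieszFactor_le _ _)
    have hdeg : (q * ∏ j ∈ range (m + 1), rieszFactor (ψ j) (l j)).natDegree < l (m + 1) := by
      have := two_mul_sum_range_lt_of_lacunary h0 hlac m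
      have := natDegree_mul_le (p := q) (q := ∏ j ∈ range (m + 1), rieszFactor (ψ j) (l j))
      omega
    rw [prod_range_succ, ← mul_assoc, sumSqNormCoeff_mul_rieszFactor hdeg, ih]

theorem Real.cos_arcsin_div_two_pos (a : ℝ) : 0 < Real.cos (Real.arcsin a / 2) :=
  Real.cos_pos_of_mem_Ioo
    ⟨by linarith [Real.neg_pi_div_two_le_arcsin a, Real.pi_pos],
      by linarith [Real.arcsin_le_pi_div_two a, Real.pi_pos]⟩

theorem Real.cos_arcsin_div_two_sq (a : ℝ) :
    Real.cos (Real.arcsin a / 2) ^ 2 = 1 / 2 * (1 + √(1 - a ^ 2)) := by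
  rw [Real.cos_sq, mul_div_cancel₀ _ two_ne_zero, Real.cos_arcsin]
  ring

theorem leadingCoeff_mul_prod_rieszFactor {q : ℂ[X]} (hq : q.Monic) {ψ : ℕ → ℝ}
    (hψ : ∀ j, Real.cos (ψ j) ≠ 0) {l : ℕ → ℕ} (hl : ∀ j, 0 < l j) (s : Finset ℕ) :
    (q * ∏ j ∈ s, rieszFactor (ψ j) (l j)).leadingCoeff = ∏ j ∈ s, (Real.cos (ψ j) : ℂ) := by
  rw [leadingCoeff_mul, leadingCoeff_prod, hq.leadingCoeff, one_mul]
  exact prod_congr rfl fun j _ => leadingCoeff_rieszFactor (hψ j) (hl j)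

theorem stmt15_general (α : ℕ → ℝ) (hα : ∀ j, α j ∈ Set.Icc (-1 : ℝ) 1)
    (l : ℕ → ℕ) (hl : ∀ j, 0 < l j) (hlac : ∀ j, 3 * l j ≤ l (j + 1))
    (ρ : Measure ℂ)
    (hweak : ∀ f : ℂ → ℝ, Continuous f →
      Tendsto (fun n => ∫ z, f z ∂(rieszPartial α l n)) atTop
        (nhds (∫ z, f z ∂ρ)))
    (n : ℕ) :
    (∏ j ∈ Finset.range (n + 1), (1 / 2) * (1 + Real.sqrt (1 - α j ^ 2))) ≤
      szegoE2 ρ (∑ j ∈ Finset.range (n + 1), l j) := by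
  refine le_csInf ⟨_, X ^ _, monic_X_pow _, natDegree_X_pow _, rfl⟩ ?_
  rintro _ ⟨q, hq, hdeg, rfl⟩
  refine ge_of_tendsto (hweak _ (q.continuous.norm.pow 2)) ?_
  filter_upwards [eventually_ge_atTop n] with m hm
  rw [integral_sq_norm_eval_rieszPartial hα,
    sumSqNormCoeff_mul_prod_rieszFactor_eq (hl 0) hlac _ hdeg.le hm]
  have hlead := leadingCoeff_mul_prod_rieszFactor (ψ := fun j => Real.arcsin (α j) / 2) hq
    (fun j => (Real.cos_arcsin_div_two_pos (α j)).ne') hl (range (n + 1))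
  calc ∏ j ∈ range (n + 1), 1 / 2 * (1 + √(1 - α j ^ 2))
      = ‖∏ j ∈ range (n + 1), (Real.cos (Real.arcsin (α j) / 2) : ℂ)‖ ^ 2 := by
        rw [← ofReal_prod, norm_real, Real.norm_eq_abs, sq_abs, ← prod_pow]
        exact prod_congr rfl fun j _ => (Real.cos_arcsin_div_two_sq _).symm
    _ ≤ _ := hlead ▸ sq_norm_coeff_le_sumSqNormCoeff _ _

theorem stmt15 (α : ℕ → ℝ) (hα : ∀ j, α j ∈ Set.Icc (-1 : ℝ) 1)
    (l : ℕ → ℕ) (hl : ∀ j, 0 < l j) (hlac : ∀ j, 3 * l j ≤ l (j + 1))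
    (ρ : Measure ℂ) [IsProbabilityMeasure ρ]
    (hweak : ∀ f : ℂ → ℝ, Continuous f →
      Tendsto (fun n => ∫ z, f z ∂(rieszPartial α l n)) atTop
        (nhds (∫ z, f z ∂ρ)))
    (n : ℕ) :
    (∏ j ∈ Finset.range (n + 1), (1 / 2) * (1 + Real.sqrt (1 - α j ^ 2))) ≤
      szegoE2 ρ (∑ j ∈ Finset.range (n + 1), l j) :=
  stmt15_general α hα l hl hlac ρ hweak n
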